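/- arXiv:2505.22253 — 3 statements merged into one kernel-verified Lean document; each statement's English description precedes it below -/
import Mathlib

section
/- Suppose f : [0,∞) → [0,∞) satisfies the differential inequality (h/2) (d/dt) f(t)² ≥ −h^{-1} g(t)² − C h f(t)² on [t₀,t₁], where g ∈ L²(t₀,t₁), h ∈ (0,1), and C > 0. If φ ∈ C_c^∞((t_-, t₁)) with φ ≥ 0 and φ ≡ 1 near t₀ (t_- < t₀), then f(t₀)² ≤ C' ( h^{-2} ∫_{t₀}^{t₁} g(s)² ds + ∫_{t₀}^{t₁} f(s)² ds ) for some constant C' depending only on C and φ. -/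
/-- Grönwall-type energy estimate. If `(h/2)(f²)' ≥ −h⁻¹g² − C h f²` on
`[t₀,t₁]`, and `φ` is a nonnegative smooth bump supported in `(t₋,t₁)` with `φ ≡ 1` near `t₀`,
then `f(t₀)² ≤ C'(h⁻²∫ g² + ∫ f²)` with `C'` depending only on `C` and `φ`. -/
theorem stmt_1
    (C : ℝ) (hC : 0 < C)
    (tm t₀ t₁ : ℝ) (h_order : tm < t₀) (h01 : t₀ < t₁)
    (φ : ℝ → ℝ) (hφ_smooth : ContDiff ℝ (⊤ : ℕ∞) φ)
    (hφ_supp : ∀ t, t ∉ Set.Ioo tm t₁ → φ t = 0)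
    (hφ_nonneg : ∀ t, 0 ≤ φ t)
    (hφ_one : ∀ᶠ t in nhds t₀, φ t = 1) :
    ∃ C' > 0, ∀ h : ℝ, h ∈ Set.Ioo (0:ℝ) 1 →
      ∀ f g : ℝ → ℝ,
        Continuous f → (∀ t, 0 ≤ f t) → Continuous g →
        (∀ t ∈ Set.Icc t₀ t₁, DifferentiableAt ℝ (fun s => f s ^ 2) t) →
        (∀ t ∈ Set.Icc t₀ t₁,
          (h / 2) * deriv (fun s => f s ^ 2) t ≥ -(h⁻¹ * g t ^ 2) - C * h * f t ^ 2) →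
        f t₀ ^ 2 ≤ C' * (h⁻¹ ^ 2 * (∫ s in t₀..t₁, g s ^ 2) + ∫ s in t₀..t₁, f s ^ 2) := by
  have hlen : (0:ℝ) < t₁ - t₀ := by linarith
  refine ⟨(t₁ - t₀)⁻¹ + 2 * C + 2, by positivity, ?_⟩
  rintro h ⟨hh0, hh1⟩ f g hf hf0 hg hdiff hineq
  set G : ℝ → ℝ := fun x => 2 * h⁻¹ ^ 2 * g x ^ 2 + 2 * C * f x ^ 2 with hG
  have hGcont : Continuous G := by continuity
  have hGnonneg : ∀ x, 0 ≤ G x := by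
    intro x
    have h1 := sq_nonneg (g x); have h2 := sq_nonneg (f x)
    have h3 : (0:ℝ) ≤ h⁻¹ ^ 2 := sq_nonneg _
    simp only [hG]
    nlinarith
  set H : ℝ → ℝ := fun t => f t ^ 2 + ∫ x in t₀..t, G x with hH
  have hFcont : Continuous fun t => f t ^ 2 := by continuity
  have hprim : Continuous fun t => ∫ x in t₀..t, G x :=
    intervalIntegral.continuous_primitive (fun a b => hGcont.intervalIntegrable a b) t₀
  have hHcont : Continuous H := hFcont.add hprim
  have hmono : MonotoneOn H (Set.Icc t₀ t₁) := by
    apply monotoneOn_of_deriv_nonneg (convex_Icc t₀ t₁) hHcont.continuousOn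
    · intro t ht
      rw [interior_Icc] at ht
      have ht' : t ∈ Set.Icc t₀ t₁ := Set.mem_Icc.2 ⟨ht.1.le, ht.2.le⟩
      exact ((hdiff t ht').add
        (intervalIntegral.integral_hasDerivAt_right (hGcont.intervalIntegrable t₀ t)
          (hGcont.stronglyMeasurableAtFilter _ _) hGcont.continuousAt).differentiableAt).differentiableWithinAt
    · intro t ht
      rw [interior_Icc] at ht
      have ht' : t ∈ Set.Icc t₀ t₁ := Set.mem_Icc.2 ⟨ht.1.le, ht.2.le⟩
      have hd1 : HasDerivAt (fun s => f s ^ 2) (deriv (fun s => f s ^ 2) t) t :=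
        (hdiff t ht').hasDerivAt
      have hd2 : HasDerivAt (fun u => ∫ x in t₀..u, G x) (G t) t :=
        intervalIntegral.integral_hasDerivAt_right (hGcont.intervalIntegrable t₀ t)
          (hGcont.stronglyMeasurableAtFilter _ _) hGcont.continuousAt
      have hder : deriv H t = deriv (fun s => f s ^ 2) t + G t := (hd1.add hd2).deriv
      rw [hder]
      have hi := hineq t ht'
      rw [ge_iff_le] at hi
      have h2 := mul_le_mul_of_nonneg_left hi (by positivity : (0:ℝ) ≤ 2 * h⁻¹)
      have hne : h ≠ 0 := ne_of_gt hh0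
      have e1 : 2 * h⁻¹ * (h / 2 * deriv (fun s => f s ^ 2) t)
          = deriv (fun s => f s ^ 2) t := by field_simp
      have e2 : 2 * h⁻¹ * (-(h⁻¹ * g t ^ 2) - C * h * f t ^ 2)
          = -(2 * h⁻¹ ^ 2 * g t ^ 2) - 2 * C * f t ^ 2 := by field_simp
      rw [e1, e2] at h2
      simp only [hG]
      linarith
  obtain ⟨s, hs, hmin⟩ := isCompact_Icc.exists_isMinOn (Set.nonempty_Icc.2 h01.le)
    (hFcont.continuousOn (s := Set.Icc t₀ t₁))
  have hmin' : ∀ x ∈ Set.Icc t₀ t₁, f s ^ 2 ≤ f x ^ 2 := fun x hx => hmin hx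
  have h1 : H t₀ ≤ H s := hmono (Set.left_mem_Icc.2 h01.le) hs hs.1
  have hHt0 : H t₀ = f t₀ ^ 2 := by simp [hH]
  have h2 : (∫ x in t₀..s, G x) ≤ ∫ x in t₀..t₁, G x := by
    apply intervalIntegral.integral_mono_interval le_rfl hs.1 hs.2
    · filter_upwards with x using hGnonneg x
    · exact hGcont.intervalIntegrable t₀ t₁
  have h3 : (t₁ - t₀) * f s ^ 2 ≤ ∫ x in t₀..t₁, f x ^ 2 := by
    have := intervalIntegral.integral_mono_on h01.le (intervalIntegrable_const (μ := MeasureTheory.volume))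
      (hFcont.intervalIntegrable t₀ t₁) hmin'
    simpa [intervalIntegral.integral_const, smul_eq_mul] using this
  have h4 : (∫ x in t₀..t₁, G x)
      = 2 * h⁻¹ ^ 2 * (∫ x in t₀..t₁, g x ^ 2) + 2 * C * ∫ x in t₀..t₁, f x ^ 2 := by
    simp only [hG]
    rw [intervalIntegral.integral_add ((by fun_prop : Continuous fun x => g x ^ 2).intervalIntegrable t₀ t₁ |>.const_mul _)
      ((by fun_prop : Continuous fun x => f x ^ 2).intervalIntegrable t₀ t₁ |>.const_mul _),
      intervalIntegral.integral_const_mul, intervalIntegral.integral_const_mul]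
  have hg2 : (0:ℝ) ≤ ∫ x in t₀..t₁, g x ^ 2 :=
    intervalIntegral.integral_nonneg h01.le (fun x _ => sq_nonneg _)
  have hf2 : (0:ℝ) ≤ ∫ x in t₀..t₁, f x ^ 2 :=
    intervalIntegral.integral_nonneg h01.le (fun x _ => sq_nonneg _)
  have hfs : f s ^ 2 ≤ (t₁ - t₀)⁻¹ * ∫ x in t₀..t₁, f x ^ 2 := by
    rw [mul_comm] at h3
    have := (le_div_iff₀ hlen).2 h3
    rwa [div_eq_inv_mul] at this
  have key : f t₀ ^ 2 ≤ f s ^ 2 + ∫ x in t₀..t₁, G x := by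
    have h5 : f t₀ ^ 2 ≤ f s ^ 2 + ∫ x in t₀..s, G x := by
      have h6 := h1; rw [hHt0] at h6; simpa [hH] using h6
    linarith
  rw [h4] at key
  set A := ∫ x in t₀..t₁, g x ^ 2
  set B := ∫ x in t₀..t₁, f x ^ 2
  have hq : (0:ℝ) ≤ h⁻¹ ^ 2 := sq_nonneg _
  nlinarith [mul_nonneg (mul_nonneg (inv_pos.2 hlen).le hq) hg2,
    mul_nonneg (mul_nonneg hC.le hq) hg2, mul_nonneg hq hg2,
    mul_nonneg hC.le hf2, mul_nonneg (inv_pos.2 hlen).le hf2]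
end

section
/- Let σ_in(x',ξ') = ρ_I(x')√(|ξ'|²_{g_I} + 1) and σ_out(x',ξ') = ρ_O(x')√(|ξ'|²_{g_O} − 1) for |ξ'|_{g_O} > 1. If ρ_O(x')²|ξ'|²_{g_O} − τ(x')²ρ_I(x')²|ξ'|²_{g_I} < 0 for all nonzero ξ' (condition (noPlasmons)), then the symbol difference σ_out(x',ξ') − τ(x')σ_in(x',ξ') is strictly negative for all (x',ξ') with |ξ'|_{g_O} > 1. Conversely, if ρ_O²|ξ'|²_{g_O} − τ²ρ_I²|ξ'|²_{g_I} > 0 for all nonzero ξ' (condition (plasmons)), then for each x' there exists ξ' with |ξ'|_{g_O} > 1 such that σ_out(x',ξ') = τ(x')σ_in(x',ξ'). -/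
lemma mul_sqrt_eq (c x : ℝ) (hc : 0 ≤ c) : c * Real.sqrt x = Real.sqrt (c ^ 2 * x) := by
  rw [Real.sqrt_mul (sq_nonneg c), Real.sqrt_sq hc]

/-- With `σ_in = ρI√(|ξ|²_{g_I}+1)` and `σ_out = ρO√(|ξ|²_{g_O}−1)` for
`|ξ|_{g_O} > 1`: under condition (noPlasmons) the symbol `σ_out − τσ_in` is strictly negative
on `{|ξ|_{g_O} > 1}`; under condition (plasmons), for each `x` there is `ξ` with
`|ξ|_{g_O} > 1` where `σ_out = τσ_in`. -/
theorem stmt_4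
    {X V : Type*} [NormedAddCommGroup V] [NormedSpace ℝ V] [Nontrivial V]
    (NI NO : X → V → ℝ)
    (hNIhom : ∀ x (t : ℝ) ξ, NI x (t • ξ) = |t| * NI x ξ)
    (hNOhom : ∀ x (t : ℝ) ξ, NO x (t • ξ) = |t| * NO x ξ)
    (hNIpos : ∀ x ξ, ξ ≠ 0 → 0 < NI x ξ)
    (hNOpos : ∀ x ξ, ξ ≠ 0 → 0 < NO x ξ)
    (hNIcont : ∀ x, Continuous (NI x)) (hNOcont : ∀ x, Continuous (NO x))
    (ρI ρO τ : X → ℝ)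
    (hρIpos : ∀ x, 0 < ρI x) (hρOpos : ∀ x, 0 < ρO x) (hτpos : ∀ x, 0 < τ x)
    (σin σout : X → V → ℝ)
    (hσin : ∀ x ξ, σin x ξ = ρI x * Real.sqrt (NI x ξ ^ 2 + 1))
    (hσout : ∀ x ξ, 1 < NO x ξ → σout x ξ = ρO x * Real.sqrt (NO x ξ ^ 2 - 1)) :
    ((∀ x ξ, ξ ≠ 0 → ρO x ^ 2 * NO x ξ ^ 2 - τ x ^ 2 * ρI x ^ 2 * NI x ξ ^ 2 < 0) →
      ∀ x ξ, 1 < NO x ξ → σout x ξ - τ x * σin x ξ < 0) ∧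
    ((∀ x ξ, ξ ≠ 0 → 0 < ρO x ^ 2 * NO x ξ ^ 2 - τ x ^ 2 * ρI x ^ 2 * NI x ξ ^ 2) →
      ∀ x, ∃ ξ, 1 < NO x ξ ∧ σout x ξ = τ x * σin x ξ) := by
  constructor
  · intro h x ξ hξ
    have hξ0 : ξ ≠ 0 := by
      intro h0
      have h2 := hNOhom x 0 ξ
      simp at h2
      rw [h0] at hξ
      linarith
    have hk := h x ξ hξ0
    rw [hσout x ξ hξ, hσin x ξ, sub_neg, ← mul_assoc,
      mul_sqrt_eq _ _ (hρOpos x).le, mul_sqrt_eq _ _ (mul_pos (hτpos x) (hρIpos x)).le]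
    have h1 : (0:ℝ) ≤ NO x ξ ^ 2 - 1 := by nlinarith
    apply Real.sqrt_lt_sqrt (mul_nonneg (sq_nonneg _) h1)
    nlinarith [sq_nonneg (ρO x), sq_nonneg (τ x * ρI x)]
  · intro h x
    obtain ⟨η, hη⟩ := exists_ne (0 : V)
    set a := NO x η with ha
    set b := NI x η with hb
    have hapos : 0 < a := hNOpos x η hη
    have hbpos : 0 < b := hNIpos x η hη
    have hc : 0 < ρO x ^ 2 * a ^ 2 - τ x ^ 2 * ρI x ^ 2 * b ^ 2 := h x η hη
    set c := ρO x ^ 2 * a ^ 2 - τ x ^ 2 * ρI x ^ 2 * b ^ 2 with hcdef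
    set f : ℝ → ℝ := fun t =>
      ρO x * Real.sqrt (t ^ 2 * a ^ 2 - 1) - τ x * ρI x * Real.sqrt (t ^ 2 * b ^ 2 + 1)
      with hf
    have hfc : Continuous f := by
      apply Continuous.sub
      · exact continuous_const.mul (Real.continuous_sqrt.comp (by continuity))
      · exact continuous_const.mul (Real.continuous_sqrt.comp (by continuity))
    set t0 : ℝ := 1 / a with ht0
    have ht0pos : 0 < t0 := by positivity
    set S : ℝ := ρO x ^ 2 + τ x ^ 2 * ρI x ^ 2 with hS
    set T : ℝ := max t0 (Real.sqrt (S / c) + 1) with hT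
    have hT1 : t0 ≤ T := le_max_left _ _
    have hTc : S / c < T ^ 2 := by
      have h1 : Real.sqrt (S / c) + 1 ≤ T := le_max_right _ _
      have h2 : Real.sqrt (S / c) < T := by
        have := Real.sqrt_nonneg (S / c); linarith
      calc S / c = Real.sqrt (S / c) ^ 2 := (Real.sq_sqrt (by positivity)).symm
        _ < T ^ 2 := by
            apply pow_lt_pow_left₀ h2 (Real.sqrt_nonneg _)
            norm_num
    have hTS : S < T ^ 2 * c := by
      rw [div_lt_iff₀ hc] at hTc; linarith
    have hft0 : f t0 < 0 := by
      have : t0 ^ 2 * a ^ 2 - 1 = 0 := by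
        rw [ht0]; field_simp [hapos.ne']; norm_num
      rw [hf]; simp only [this, Real.sqrt_zero, mul_zero, zero_sub, neg_neg]
      have h1 : (1:ℝ) ≤ Real.sqrt (t0 ^ 2 * b ^ 2 + 1) := by
        nth_rewrite 1 [show (1:ℝ) = Real.sqrt 1 from Real.sqrt_one.symm]
        exact Real.sqrt_le_sqrt (by nlinarith [mul_nonneg (sq_nonneg t0) (sq_nonneg b)])
      have := mul_pos (hτpos x) (hρIpos x)
      nlinarith
    have hfT : 0 < f T := by
      rw [hf]
      simp only [sub_pos]
      rw [mul_sqrt_eq _ _ (hρOpos x).le, mul_sqrt_eq _ _ (mul_pos (hτpos x) (hρIpos x)).le]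
      apply Real.sqrt_lt_sqrt (by positivity)
      have hTpos : 0 < T := lt_of_lt_of_le ht0pos hT1
      nlinarith
    have hiv := intermediate_value_Icc hT1 hfc.continuousOn
    have h0mem : (0:ℝ) ∈ Set.Icc (f t0) (f T) := ⟨hft0.le, hfT.le⟩
    obtain ⟨t, htmem, htf⟩ := hiv h0mem
    have htne : t ≠ t0 := by
      intro hte; rw [hte] at htf; rw [htf] at hft0; exact lt_irrefl _ hft0
    have ht0lt : t0 < t := lt_of_le_of_ne htmem.1 (Ne.symm htne)
    have htpos : 0 < t := lt_trans ht0pos ht0lt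
    refine ⟨t • η, ?_, ?_⟩
    · rw [hNOhom, abs_of_pos htpos, ← ha]
      rw [ht0, div_lt_iff₀ hapos] at ht0lt
      exact ht0lt
    · have hNO : NO x (t • η) = t * a := by rw [hNOhom, abs_of_pos htpos]
      have hNI : NI x (t • η) = t * b := by rw [hNIhom, abs_of_pos htpos]
      have hgt1 : 1 < NO x (t • η) := by
        rw [hNO]; rw [ht0, div_lt_iff₀ hapos] at ht0lt; exact ht0lt
      rw [hσout x _ hgt1, hσin, hNO, hNI]
      have : f t = 0 := htf
      rw [hf] at this
      simp only [mul_pow] at this ⊢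
      rw [← mul_assoc]
      linarith
end

section
/- Let f : [t₀, ∞) → [0,∞) be C¹, let h, c > 0 be constants, let g ∈ L²(t₀, t₂), and let t₀ < t₁ < t₂. Suppose (h/2)f'(t) ≥ −g(t)² + c f(t) for t ∈ (t₀, t₂), and let φ ∈ C_c^∞((t_-, t₂)) with φ ≥ 0 and φ ≡ 1 on [t₀, t₁]. Then f(t₀) + (2c/h)∫_{t₀}^{t₁} f ≤ (2/h)∫_{t₀}^{t₂} g² + C_φ ∫_{t₁}^{t₂} f. -/
/-- Elliptic-regime energy estimate: if `(h/2)f'(t) ≥ −g(t)² + c f(t)` on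
`(t₀,t₂)` and `φ` is a smooth bump `≡ 1` on `[t₀,t₁]` supported in `(t₋,t₂)`, then
`f(t₀) + (2c/h)∫_{t₀}^{t₁} f ≤ (2/h)∫_{t₀}^{t₂} g² + C_φ ∫_{t₁}^{t₂} f`. -/
theorem stmt_12
    (tm t₀ t₁ t₂ : ℝ) (h0 : tm < t₀) (h1 : t₀ < t₁) (h2 : t₁ < t₂)
    (φ : ℝ → ℝ) (hφsm : ContDiff ℝ (⊤ : ℕ∞) φ)
    (hφsupp : ∀ t, t ∉ Set.Ioo tm t₂ → φ t = 0)
    (hφnn : ∀ t, 0 ≤ φ t)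
    (hφone : ∀ t ∈ Set.Icc t₀ t₁, φ t = 1) :
    ∃ Cφ > 0, ∀ h c : ℝ, 0 < h → 0 < c →
      ∀ f f' g : ℝ → ℝ,
        Continuous g → (∀ t, 0 ≤ f t) →
        (∀ t ∈ Set.Icc t₀ t₂, HasDerivAt f (f' t) t) →
        ContinuousOn f' (Set.Icc t₀ t₂) →
        (∀ t ∈ Set.Ioo t₀ t₂, (h / 2) * f' t ≥ -(g t ^ 2) + c * f t) →
        f t₀ + (2 * c / h) * ∫ s in t₀..t₁, f s ≤
          (2 / h) * (∫ s in t₀..t₂, g s ^ 2) + Cφ * ∫ s in t₁..t₂, f s := by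
  refine ⟨1 / (t₂ - t₁), one_div_pos.2 (by linarith), ?_⟩
  intro h c hh hc f f' g hg hfnn hderiv hf'c hineq
  -- continuity of f on [t₀, t₂]
  have hfc : ContinuousOn f (Set.Icc t₀ t₂) := fun t ht =>
    (hderiv t ht).continuousAt.continuousWithinAt
  have h12 : t₁ ≤ t₂ := le_of_lt h2
  have h01 : t₀ ≤ t₁ := le_of_lt h1
  have hsub : Set.Icc t₁ t₂ ⊆ Set.Icc t₀ t₂ := Set.Icc_subset_Icc (le_of_lt h1) le_rfl
  -- minimum point of f on [t₁, t₂]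
  obtain ⟨tS, htS, hmin⟩ := isCompact_Icc.exists_isMinOn (Set.nonempty_Icc.2 h12)
    (hfc.mono hsub)
  have htS1 : t₁ ≤ tS := htS.1
  have htS2 : tS ≤ t₂ := htS.2
  have h0S : t₀ ≤ tS := le_trans h01 htS1
  have hsub2 : Set.Icc t₀ tS ⊆ Set.Icc t₀ t₂ := Set.Icc_subset_Icc le_rfl htS2
  -- FTC : f tS - f t₀ = ∫ f'
  have hf'int : IntervalIntegrable f' MeasureTheory.volume t₀ tS :=
    (hf'c.mono hsub2).intervalIntegrable_of_Icc h0S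
  have hFTC : ∫ s in t₀..tS, f' s = f tS - f t₀ := by
    apply intervalIntegral.integral_eq_sub_of_hasDerivAt
    · intro t ht
      rw [Set.uIcc_of_le h0S] at ht
      exact hderiv t (hsub2 ht)
    · exact hf'int
  -- pointwise lower bound for f' a.e.
  have hfint : IntervalIntegrable f MeasureTheory.volume t₀ tS :=
    ((hfc.mono hsub2).intervalIntegrable_of_Icc h0S)
  have hlhsint : IntervalIntegrable (fun s => (2 / h) * (c * f s) - (2 / h) * g s ^ 2)
      MeasureTheory.volume t₀ tS := by
    apply IntervalIntegrable.sub
    · exact (hfint.const_mul c).const_mul (2 / h)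
    · exact ((hg.pow 2).intervalIntegrable t₀ tS).const_mul (2 / h)
  have hmono : ∫ s in t₀..tS, ((2 / h) * (c * f s) - (2 / h) * g s ^ 2) ≤
      ∫ s in t₀..tS, f' s := by
    apply intervalIntegral.integral_mono_ae_restrict h0S hlhsint hf'int
    have hnull : ∀ᵐ s ∂MeasureTheory.volume, s ∉ ({t₀, t₂} : Set ℝ) := by
      rw [← MeasureTheory.measure_eq_zero_iff_ae_notMem]
      exact (Set.toFinite ({t₀, t₂} : Set ℝ)).measure_zero _
    have hmem := MeasureTheory.ae_restrict_mem (μ := MeasureTheory.volume) (measurableSet_Icc (a := t₀) (b := tS))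
    filter_upwards [hmem, MeasureTheory.ae_restrict_of_ae hnull] with s hs hns
    have hsIoo : s ∈ Set.Ioo t₀ t₂ := by
      simp only [Set.mem_insert_iff, Set.mem_singleton_iff, not_or] at hns
      exact ⟨lt_of_le_of_ne hs.1 (Ne.symm hns.1), lt_of_le_of_ne (le_trans hs.2 htS2) hns.2⟩
    have := hineq s hsIoo
    have hh' : (0:ℝ) < h / 2 := by positivity
    rw [ge_iff_le, ← sub_nonneg] at this
    have key0 : 0 ≤ (2 / h) * (h / 2 * f' s - (-(g s ^ 2) + c * f s)) :=
      mul_nonneg (by positivity) this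
    have heq : (2 / h) * (h / 2 * f' s - (-(g s ^ 2) + c * f s)) =
        f' s - ((2 / h) * (c * f s) - (2 / h) * g s ^ 2) := by
      field_simp
      ring
    linarith [heq ▸ key0]
  rw [hFTC] at hmono
  rw [intervalIntegral.integral_sub ((hfint.const_mul c).const_mul (2 / h))
    (show IntervalIntegrable (fun s => (2 / h) * g s ^ 2) MeasureTheory.volume t₀ tS from
      ((hg.pow 2).intervalIntegrable t₀ tS).const_mul (2 / h)),
    intervalIntegral.integral_const_mul, intervalIntegral.integral_const_mul,
    intervalIntegral.integral_const_mul] at hmono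
  -- monotonicity of the integrals
  have hsplitf : ∫ s in t₀..t₁, f s ≤ ∫ s in t₀..tS, f s := by
    have hT : IntervalIntegrable f MeasureTheory.volume t₁ tS :=
      ((hfc.mono (Set.Icc_subset_Icc h01 htS2)).intervalIntegrable_of_Icc htS1)
    have h0 : 0 ≤ ∫ s in t₁..tS, f s :=
      intervalIntegral.integral_nonneg htS1 (fun s _ => hfnn s)
    have := intervalIntegral.integral_add_adjacent_intervals
      ((hfc.mono (Set.Icc_subset_Icc le_rfl h12)).intervalIntegrable_of_Icc h01) hT
    linarith [this]
  have hsplitg : ∫ s in t₀..tS, g s ^ 2 ≤ ∫ s in t₀..t₂, g s ^ 2 := by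
    have h0 : 0 ≤ ∫ s in tS..t₂, g s ^ 2 :=
      intervalIntegral.integral_nonneg htS2 (fun s _ => sq_nonneg _)
    have : (∫ s in t₀..tS, g s ^ 2) + (∫ s in tS..t₂, g s ^ 2) = ∫ s in t₀..t₂, g s ^ 2 :=
      intervalIntegral.integral_add_adjacent_intervals
      ((hg.pow 2).intervalIntegrable (μ := MeasureTheory.volume) t₀ tS)
      ((hg.pow 2).intervalIntegrable (μ := MeasureTheory.volume) tS t₂)
    linarith [this]
  -- f tS ≤ average of f over [t₁, t₂]
  have havg : (t₂ - t₁) * f tS ≤ ∫ s in t₁..t₂, f s := by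
    have : ∫ s in t₁..t₂, f tS ≤ ∫ s in t₁..t₂, f s := by
      apply intervalIntegral.integral_mono_on h12 (intervalIntegrable_const)
        ((hfc.mono (Set.Icc_subset_Icc h01 le_rfl)).intervalIntegrable_of_Icc h12)
      intro s hs
      exact hmin hs
    rwa [intervalIntegral.integral_const, smul_eq_mul] at this
  have hfS : f tS ≤ (1 / (t₂ - t₁)) * ∫ s in t₁..t₂, f s := by
    rw [div_mul_eq_mul_div, le_div_iff₀ (by linarith)]
    linarith [havg]
  have hc2h : 0 ≤ 2 * c / h := by positivity
  have h2h : 0 ≤ 2 / h := by positivity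
  have key : f t₀ + (2 / h) * c * ∫ s in t₀..t₁, f s ≤
      f tS + (2 / h) * ∫ s in t₀..t₂, g s ^ 2 := by
    have e1 : (2 / h) * c * ∫ s in t₀..t₁, f s ≤ (2 / h) * c * ∫ s in t₀..tS, f s := by
      apply mul_le_mul_of_nonneg_left hsplitf (by positivity)
    have e2 : (2 / h) * ∫ s in t₀..tS, g s ^ 2 ≤ (2 / h) * ∫ s in t₀..t₂, g s ^ 2 :=
      mul_le_mul_of_nonneg_left hsplitg h2h
    nlinarith [hmono, e1, e2]
  have : 2 * c / h = (2 / h) * c := by ring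
  rw [this]
  linarith [key, hfS]
end
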